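/- arXiv:2311.15039 — 2 statements merged into one kernel-verified Lean document; each statement's English description precedes it below -/
import Mathlib

section
/- Let G be a group generated by a finite set, let x ∈ G, and let φ : G → G be an injective group endomorphism. Then the orbit of x through φ, Orb_φ(x) = {φᵏ(x) : k ∈ ℕ}, viewed inside the ascending HNN-extension G∗_φ via the canonical embedding of : G → G∗_φ, is an algebraic subset of G∗_φ (which is itself generated by the finite set consisting of the images of the generators of G together with the stable letter t). -/
/-!
Write `x` as a word `w` in the generators of `G`. In `G∗_φ` the relation `t⁻¹ g t = φ g` gives
`φᵏ(x) = t⁻ᵏ x tᵏ`, so the orbit is the image of the language `{(t⁻¹)ᵏ w tᵏ : k ∈ ℕ}`, which is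
generated by the context-free grammar `Z → t⁻¹ Z t | w`.
-/

/-- The canonical monoid homomorphism `π` from the free monoid over the alphabet
`X ⊕ X` (generators and their formal inverses) to a group `G`, induced by `f : X → G`. -/
def wordHom {X G : Type} [Group G] (f : X → G) : FreeMonoid (X ⊕ X) →* G :=
  FreeMonoid.lift (Sum.elim f fun x => (f x)⁻¹)

/-- A subset `S ⊆ G` is algebraic (with respect to the generating map `f : X → G`)
if it is the image under the canonical homomorphism of a context-free language. -/
def IsAlgebraicSubset {X G : Type} [Group G] (f : X → G) (S : Set G) : Prop :=
  ∃ L : Language (X ⊕ X), L.IsContextFree ∧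
    (fun w : List (X ⊕ X) => wordHom f (FreeMonoid.ofList w)) '' L = S

/-- The ascending HNN-extension `G∗_φ` of a group `G` along an injective endomorphism
`φ : G → G`: the HNN extension of `G` with associated subgroups `φ.range` and `⊤`, with
the isomorphism `φ.range ≃* ⊤` induced by `φ`, so that the defining relation is
`t⁻¹ g t = φ g` for all `g ∈ G` (`of : G → G∗_φ` is the canonical embedding and `t` the
stable letter). -/
noncomputable abbrev AscendingHNN {G : Type} [Group G] (φ : G →* G)
    (hφ : Function.Injective φ) : Type :=
  HNNExtension G φ.range ⊤ ((Subgroup.topEquiv.trans (MonoidHom.ofInjective hφ)).symm)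

theorem FreeMonoid.ofList_replicate {α : Type*} (k : ℕ) (a : α) :
    FreeMonoid.ofList (List.replicate k a) = FreeMonoid.of a ^ k := by
  induction k with
  | zero => rfl
  | succ k ih => rw [List.replicate_succ, FreeMonoid.ofList_cons, ih, pow_succ']

section wordHom

variable {X Y G H : Type} [Group G] [Group H]

theorem wordHom_surjective {f : X → G} (hgen : Subgroup.closure (Set.range f) = ⊤) :
    Function.Surjective (wordHom f) := by
  rw [← MonoidHom.mrange_eq_top, wordHom, FreeMonoid.mrange_lift, Set.Sum.elim_range,
    ← Set.inv_range, ← Subgroup.closure_toSubmonoid, hgen]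
  rfl

theorem wordHom_map {f : X → G} {F : Y → H} {e : X → Y} (ψ : G →* H)
    (h : ∀ x, F (e x) = ψ (f x)) (w : FreeMonoid (X ⊕ X)) :
    wordHom F (FreeMonoid.map (Sum.map e e) w) = ψ (wordHom f w) := by
  rw [← MonoidHom.comp_apply, ← MonoidHom.comp_apply]
  congr 1
  refine FreeMonoid.hom_eq fun c => ?_
  cases c <;> simp [wordHom, h]

theorem wordHom_replicate_append_replicate (F : Y → H) (c d : Y ⊕ Y) (w : List (Y ⊕ Y)) (k : ℕ) :
    wordHom F (FreeMonoid.ofList (List.replicate k c ++ w ++ List.replicate k d)) =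
      wordHom F (FreeMonoid.of c) ^ k * wordHom F (FreeMonoid.ofList w) *
        wordHom F (FreeMonoid.of d) ^ k := by
  simp only [FreeMonoid.ofList_append, FreeMonoid.ofList_replicate, map_mul, map_pow]

end wordHom

namespace AscendingHNN

variable {G : Type} [Group G] {φ : G →* G} {hφ : Function.Injective φ}

theorem of_map (g : G) :
    (HNNExtension.of (φ g) : AscendingHNN φ hφ) =
      HNNExtension.t⁻¹ * HNNExtension.of g * HNNExtension.t := by
  simpa [MonoidHom.ofInjective_apply] using HNNExtension.equiv_symm_eq_conj
    (φ := (Subgroup.topEquiv.trans (MonoidHom.ofInjective hφ)).symm) ⟨g, Subgroup.mem_top g⟩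

theorem of_iterate (g : G) (k : ℕ) :
    (HNNExtension.of ((⇑φ)^[k] g) : AscendingHNN φ hφ) =
      HNNExtension.t⁻¹ ^ k * HNNExtension.of g * HNNExtension.t ^ k := by
  induction k with
  | zero => simp
  | succ k ih =>
    rw [Function.iterate_succ_apply', of_map, ih]
    group

end AscendingHNN

namespace ContextFreeRule

variable {T N : Type*} {r : ContextFreeRule T N}

lemma not_rewrites_map_terminal (p : List T) (v : List (Symbol T N)) :
    ¬ r.Rewrites (p.map Symbol.terminal) v := fun h => by
  simpa using h.nonterminal_input_mem

lemma rewrites_single_nonterminal_iff {p q : List T} {n : N} {v : List (Symbol T N)} :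
    r.Rewrites (p.map Symbol.terminal ++ Symbol.nonterminal n :: q.map Symbol.terminal) v ↔
      n = r.input ∧ v = p.map Symbol.terminal ++ r.output ++ q.map Symbol.terminal := by
  refine ⟨fun h => ?_, ?_⟩
  · induction p generalizing v with
    | nil =>
      cases h with
      | head => simp
      | cons _ h => exact (not_rewrites_map_terminal _ _ h).elim
    | cons a p ih =>
      cases h with
      | cons _ h => simpa using ih h
  · rintro ⟨rfl, rfl⟩
    simpa using rewrites_of_exists_parts r (p.map Symbol.terminal) (q.map Symbol.terminal)

end ContextFreeRule

namespace ContextFreeGrammar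

variable {T : Type*} (a b : T) (w : List T)

def nestingForm (k : ℕ) : List (Symbol T Unit) :=
  (List.replicate k a).map .terminal ++ .nonterminal () :: (List.replicate k b).map .terminal

lemma nestingForm_succ (k : ℕ) :
    nestingForm a b (k + 1) =
      (List.replicate k a).map .terminal ++ [.terminal a, .nonterminal (), .terminal b] ++
        (List.replicate k b).map .terminal := by
  rw [nestingForm, List.replicate_succ', List.replicate_succ]
  simp

variable [DecidableEq T]

def nesting : ContextFreeGrammar T where
  NT := Unit
  initial := ()
  rules := {⟨(), [.terminal a, .nonterminal (), .terminal b]⟩, ⟨(), w.map .terminal⟩}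

lemma mem_nesting_rules {r : ContextFreeRule T Unit} :
    r ∈ (nesting a b w).rules ↔
      r = ⟨(), [.terminal a, .nonterminal (), .terminal b]⟩ ∨ r = ⟨(), w.map .terminal⟩ :=
  Finset.mem_insert.trans (or_congr_right Finset.mem_singleton)

lemma nesting_derives_nestingForm (k : ℕ) :
    (nesting a b w).Derives [.nonterminal ()] (nestingForm a b k) := by
  induction k with
  | zero => exact Derives.refl _
  | succ k ih =>
    refine ih.trans_produces ⟨_, (mem_nesting_rules a b w).2 (.inl rfl), ?_⟩
    exact ContextFreeRule.rewrites_single_nonterminal_iff.2 ⟨rfl, nestingForm_succ a b k⟩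

lemma nesting_derives_cases {u : List (Symbol T Unit)}
    (h : (nesting a b w).Derives [.nonterminal ()] u) :
    (∃ k, u = nestingForm a b k) ∨
      ∃ k, u = (List.replicate k a ++ w ++ List.replicate k b).map .terminal := by
  induction h with
  | refl => exact .inl ⟨0, rfl⟩
  | tail _ hstep ih =>
    obtain ⟨r, hr, hrw⟩ := hstep
    rcases ih with ⟨k, rfl⟩ | ⟨k, rfl⟩
    · obtain ⟨-, rfl⟩ := ContextFreeRule.rewrites_single_nonterminal_iff.1 hrw
      rcases (mem_nesting_rules a b w).1 hr with rfl | rfl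
      · exact .inl ⟨k + 1, (nestingForm_succ a b k).symm⟩
      -- `rfl` closes the goal because `(nesting a b w).NT` is `Unit` only up to unfolding.
      · exact .inr ⟨k, by simp only [List.map_append]; rfl⟩
    · exact (ContextFreeRule.not_rewrites_map_terminal _ _ hrw).elim

theorem nesting_language :
    (nesting a b w).language =
      Set.range fun k => List.replicate k a ++ w ++ List.replicate k b := by
  ext u
  rw [mem_language_iff]
  constructor
  · intro h
    rcases nesting_derives_cases a b w h with ⟨k, hk⟩ | ⟨k, hk⟩
    · have : Symbol.nonterminal () ∈ nestingForm a b k := by simp [nestingForm]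
      obtain ⟨_, -, h⟩ := List.mem_map.1 (hk ▸ this)
      cases h
    · exact ⟨k, (List.map_injective_iff.2 (fun _ _ h => Symbol.terminal.inj h) hk).symm⟩
  · rintro ⟨k, rfl⟩
    refine (nesting_derives_nestingForm a b w k).trans_produces
      ⟨_, (mem_nesting_rules a b w).2 (.inr rfl), ?_⟩
    exact ContextFreeRule.rewrites_single_nonterminal_iff.2
      ⟨rfl, by simp only [List.map_append]; rfl⟩

end ContextFreeGrammar

theorem Language.isContextFree_range_replicate_append_replicate {T : Type*} (a b : T)
    (w : List T) :
    Language.IsContextFree (Set.range fun k => List.replicate k a ++ w ++ List.replicate k b) := by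
  classical
  exact ⟨_, ContextFreeGrammar.nesting_language a b w⟩

theorem orbit_isAlgebraic_ascendingHNN_general {X G : Type} [Group G] (f : X → G)
    (hgen : Subgroup.closure (Set.range f) = ⊤)
    (x : G) (φ : G →* G) (hφ : Function.Injective φ) :
    IsAlgebraicSubset
      (Sum.elim (fun y : X => (HNNExtension.of (f y) : AscendingHNN φ hφ))
        (fun _ : Unit => (HNNExtension.t : AscendingHNN φ hφ)))
      (HNNExtension.of '' (Set.range fun k : ℕ => (⇑φ)^[k] x)) := by
  obtain ⟨w, rfl⟩ := wordHom_surjective hgen x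
  refine ⟨_, Language.isContextFree_range_replicate_append_replicate (Sum.inr (Sum.inr ()))
    (Sum.inl (Sum.inr ())) (FreeMonoid.map (Sum.map Sum.inl Sum.inl) w).toList, ?_⟩
  rw [← Set.range_comp, ← Set.range_comp]
  congr 1
  funext k
  simp only [Function.comp_apply, wordHom_replicate_append_replicate, FreeMonoid.ofList_toList,
    AscendingHNN.of_iterate]
  rw [wordHom_map (H := AscendingHNN φ hφ) HNNExtension.of (e := Sum.inl) fun _ => rfl]
  simp [wordHom]

/-- Let `G` be a group generated by a finite set (given by `f : X → G`), `x ∈ G` and `φ`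
an injective endomorphism of `G`. Then the orbit `{φᵏ(x) : k ∈ ℕ}` of `x` through `φ`,
viewed inside the ascending HNN-extension `G∗_φ` via the canonical embedding, is an
algebraic subset of `G∗_φ` with respect to the finite generating set consisting of the
images of the generators of `G` together with the stable letter `t`. -/
theorem orbit_isAlgebraic_ascendingHNN {X G : Type} [Fintype X] [Group G] (f : X → G)
    (hgen : Subgroup.closure (Set.range f) = ⊤)
    (x : G) (φ : G →* G) (hφ : Function.Injective φ) :
    IsAlgebraicSubset
      (Sum.elim (fun y : X => (HNNExtension.of (f y) : AscendingHNN φ hφ))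
        (fun _ : Unit => (HNNExtension.t : AscendingHNN φ hφ)))
      (HNNExtension.of '' (Set.range fun k : ℕ => (⇑φ)^[k] x)) :=
  orbit_isAlgebraic_ascendingHNN_general f hgen x φ hφ
end

section
/- Let m ≥ 1, let M be an m × m integer matrix with nonzero determinant, regarded as an injective endomorphism of ℤᵐ, let G = ℤᵐ ∗_M be the corresponding ascending HNN-extension with stable letter t and canonical embedding of : ℤᵐ → G, and let u ∈ ℤᵐ. Then the subgroup S = ⟨{t⁻ᵏ · of(u) · tᵏ : k ∈ ℤ}⟩ is an algebraic subset of G, where G is generated by the finite set consisting of the images of the standard basis vectors of ℤᵐ together with t. -/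
/-- The endomorphism of the free-abelian group `ℤᵐ` (written multiplicatively as
`Multiplicative (Fin m → ℤ)`) induced by an `m × m` integer matrix `M`, `u ↦ u M`. -/
def matHom {m : ℕ} (M : Matrix (Fin m) (Fin m) ℤ) :
    Multiplicative (Fin m → ℤ) →* Multiplicative (Fin m → ℤ) :=
  AddMonoidHom.toMultiplicative (Matrix.vecMulLinear M).toAddMonoidHom

/-!
In any group, the subgroup generated by the conjugates `t⁻ᵏ g tᵏ` (`k ∈ ℤ`) is the image of
the context-free grammar `S → S S | C | ε`, `C → t⁻¹ C t | t C t⁻¹ | g | g⁻¹`, once `t`, `t⁻¹`,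
`g`, `g⁻¹` are replaced by words in the generators spelling them. Soundness: the subgroup (for
`S`) and the conjugates together with their inverses (for `C`) are closed under the rules.
Completeness: `C` derives every `t⁻ᵏ g^{±1} tᵏ` by induction on `k`, and the values derivable
from `S` form a submonoid. In `ℤᵐ ∗_M`, `of u` is a product of powers of the images of the
basis vectors, so both it and `t` are spelled by words.
-/

open Pointwise

namespace ContextFreeGrammar

section Values

variable {T G : Type} [Monoid G] (ev : T → G)

def symbolSet {N : Type} (μ : N → Set G) : Symbol T N → Set G
  | .terminal a => {ev a}
  | .nonterminal n => μ n

def valuesFrom (g : ContextFreeGrammar T) (n : g.NT) : Set G :=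
  {x | ∃ w : List T, g.Derives [.nonterminal n] (w.map .terminal) ∧ (w.map ev).prod = x}

theorem image_language_eq_valuesFrom (g : ContextFreeGrammar T) :
    (fun w : List T => (w.map ev).prod) '' g.language = g.valuesFrom ev g.initial :=
  rfl

theorem prod_map_symbolSet_terminal {N : Type} (μ : N → Set G) (w : List T) :
    (((w.map (Symbol.terminal : T → Symbol T N)).map (symbolSet ev μ)).prod : Set G)
      = {(w.map ev).prod} := by
  induction w with
  | nil => rfl
  | cons a l ih =>
    simp only [List.map_cons, List.prod_cons, symbolSet, ih, Set.singleton_mul_singleton]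

variable {g : ContextFreeGrammar T} {μ : g.NT → Set G}

theorem Derives.prod_symbolSet_subset
    (hrules : ∀ r ∈ g.rules, (r.output.map (symbolSet ev μ)).prod ⊆ μ r.input)
    {v w : List (Symbol T g.NT)} (h : g.Derives v w) :
    (w.map (symbolSet ev μ)).prod ⊆ (v.map (symbolSet ev μ)).prod := by
  induction h with
  | refl => exact subset_rfl
  | tail _ hstep ih =>
    obtain ⟨r, hr, hrw⟩ := hstep
    obtain ⟨p, q, rfl, rfl⟩ := hrw.exists_parts
    refine subset_trans ?_ ih
    simp only [List.map_append, List.prod_append, List.map_cons, List.map_nil,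
      List.prod_cons, List.prod_nil, mul_one, symbolSet]
    gcongr
    exact hrules r hr

theorem valuesFrom_subset
    (hrules : ∀ r ∈ g.rules, (r.output.map (symbolSet ev μ)).prod ⊆ μ r.input) (n : g.NT) :
    g.valuesFrom ev n ⊆ μ n := by
  rintro _ ⟨w, hw, rfl⟩
  have h := hw.prod_symbolSet_subset ev hrules
  simp only [prod_map_symbolSet_terminal, List.map_cons, List.map_nil, List.prod_cons,
    List.prod_nil, mul_one, symbolSet, Set.singleton_subset_iff] at h
  exact h

theorem mem_valuesFrom_of_terminal_rule {n : g.NT} {w : List T}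
    (hr : ⟨n, w.map .terminal⟩ ∈ g.rules) : (w.map ev).prod ∈ g.valuesFrom ev n :=
  ⟨w, Produces.single ⟨_, hr, ContextFreeRule.Rewrites.input_output⟩, rfl⟩

theorem mem_valuesFrom_of_sandwich_rule {n n' : g.NT} {u v : List T} {x : G}
    (hr : ⟨n, u.map .terminal ++ .nonterminal n' :: v.map .terminal⟩ ∈ g.rules)
    (hx : x ∈ g.valuesFrom ev n') :
    (u.map ev).prod * x * (v.map ev).prod ∈ g.valuesFrom ev n := by
  obtain ⟨w, hw, rfl⟩ := hx
  refine ⟨u ++ w ++ v, ?_, by simp only [List.map_append, List.prod_append]⟩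
  refine Produces.trans_derives ⟨_, hr, ContextFreeRule.Rewrites.input_output⟩ ?_
  simpa using (hw.append_right (v.map .terminal)).append_left (u.map .terminal)

theorem mul_mem_valuesFrom_of_rule {n n₁ n₂ : g.NT} {x y : G}
    (hr : ⟨n, [.nonterminal n₁, .nonterminal n₂]⟩ ∈ g.rules)
    (hx : x ∈ g.valuesFrom ev n₁) (hy : y ∈ g.valuesFrom ev n₂) :
    x * y ∈ g.valuesFrom ev n := by
  obtain ⟨w₁, hw₁, rfl⟩ := hx
  obtain ⟨w₂, hw₂, rfl⟩ := hy
  refine ⟨w₁ ++ w₂, ?_, by simp only [List.map_append, List.prod_append]⟩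
  refine Produces.trans_derives ⟨_, hr, ContextFreeRule.Rewrites.input_output⟩ ?_
  rw [List.map_append]
  exact (hw₁.append_right _).trans (hw₂.append_left _)

end Values

end ContextFreeGrammar

theorem Set.singleton_mul_mul_singleton_subset {α : Type*} [Semigroup α] {a b : α}
    {s S : Set α} (h : ∀ x ∈ s, a * x * b ∈ S) : {a} * (s * {b}) ⊆ S := by
  rintro _ ⟨_, rfl, _, ⟨x, hx, _, rfl, rfl⟩, rfl⟩
  simpa only [mul_assoc] using h x hx

section ConjugatesGrammar

open ContextFreeGrammar

variable {T G : Type} [Group G]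

theorem zpow_neg_mul_mul_zpow_mem {S : Set G} {t : G}
    (hS : ∀ x ∈ S, t⁻¹ * x * t ∈ S ∧ t * x * t⁻¹ ∈ S) {x : G} (hx : x ∈ S) (k : ℤ) :
    t ^ (-k) * x * t ^ k ∈ S := by
  induction k using Int.induction_on with
  | zero => simpa using hx
  | succ k ih => convert (hS _ ih).1 using 1; group
  | pred k ih => convert (hS _ ih).2 using 1; group

/-- `S → S S | C | ε`, `C → a' C a | a C a' | b | b'` with `S = true` and `C = false`. -/
abbrev conjugatesGrammar [DecidableEq T] (a a' b b' : List T) : ContextFreeGrammar T where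
  NT := Bool
  initial := true
  rules := {⟨true, []⟩, ⟨true, [.nonterminal true, .nonterminal true]⟩,
    ⟨true, [.nonterminal false]⟩,
    ⟨false, a'.map .terminal ++ .nonterminal false :: a.map .terminal⟩,
    ⟨false, a.map .terminal ++ .nonterminal false :: a'.map .terminal⟩,
    ⟨false, b.map .terminal⟩, ⟨false, b'.map .terminal⟩}

theorem zpow_neg_mul_mul_zpow_mem_range_union_inv (g t : G) (k : ℤ) {x : G}
    (hx : x ∈ Set.range (fun j : ℤ => t ^ (-j) * g * t ^ j) ∪
      (Set.range fun j : ℤ => t ^ (-j) * g * t ^ j)⁻¹) :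
    t ^ (-k) * x * t ^ k ∈ Set.range (fun j : ℤ => t ^ (-j) * g * t ^ j) ∪
      (Set.range fun j : ℤ => t ^ (-j) * g * t ^ j)⁻¹ := by
  rcases hx with ⟨j, rfl⟩ | ⟨j, hj⟩
  · exact Or.inl ⟨j + k, by group⟩
  · refine Or.inr ⟨j + k, ?_⟩
    simp only [mul_inv_rev] at hj ⊢
    rw [← hj]
    group

variable [DecidableEq T] (ev : T → G) {a a' b b' : List T} {g t : G}

theorem valuesFrom_conjugatesGrammar_subset
    (ha : (a.map ev).prod = t) (ha' : (a'.map ev).prod = t⁻¹)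
    (hb : (b.map ev).prod = g) (hb' : (b'.map ev).prod = g⁻¹) :
    (conjugatesGrammar a a' b b').valuesFrom ev true ⊆
      Subgroup.closure (Set.range fun k : ℤ => t ^ (-k) * g * t ^ k) := by
  set R := Set.range fun k : ℤ => t ^ (-k) * g * t ^ k
  let μ : Bool → Set G
    | true => Subgroup.closure R
    | false => R ∪ R⁻¹
  refine valuesFrom_subset (g := conjugatesGrammar a a' b b') (μ := μ) ev ?_ true
  intro r hr
  simp only [Finset.mem_insert, Finset.mem_singleton] at hr
  rcases hr with rfl | rfl | rfl | rfl | rfl | rfl | rfl <;>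
    simp only [List.map_append, List.map_cons, List.map_nil, List.prod_append, List.prod_cons,
      List.prod_nil, mul_one, prod_map_symbolSet_terminal, symbolSet, ha, ha', hb, hb',
      Set.singleton_subset_iff, μ]
  · exact Set.one_subset.2 (one_mem _)
  · exact Set.mul_subset_iff.2 fun x hx y hy => mul_mem hx hy
  · refine Set.union_subset Subgroup.subset_closure fun x hx => ?_
    simpa using inv_mem (Subgroup.subset_closure hx)
  · refine Set.singleton_mul_mul_singleton_subset fun x hx => ?_
    simpa only [zpow_neg_one, zpow_one] using zpow_neg_mul_mul_zpow_mem_range_union_inv g t 1 hx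
  · refine Set.singleton_mul_mul_singleton_subset fun x hx => ?_
    simpa only [neg_neg, zpow_neg_one, zpow_one] using
      zpow_neg_mul_mul_zpow_mem_range_union_inv g t (-1) hx
  · exact Or.inl ⟨0, by simp⟩
  · exact Or.inr ⟨0, by simp⟩

theorem closure_subset_valuesFrom_conjugatesGrammar
    (ha : (a.map ev).prod = t) (ha' : (a'.map ev).prod = t⁻¹)
    (hb : (b.map ev).prod = g) (hb' : (b'.map ev).prod = g⁻¹) :
    (Subgroup.closure (Set.range fun k : ℤ => t ^ (-k) * g * t ^ k) : Set G) ⊆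
      (conjugatesGrammar a a' b b').valuesFrom ev true := by
  set γ := conjugatesGrammar a a' b b'
  set R := Set.range fun k : ℤ => t ^ (-k) * g * t ^ k
  have hconj : ∀ x ∈ γ.valuesFrom ev false,
      t⁻¹ * x * t ∈ γ.valuesFrom ev false ∧ t * x * t⁻¹ ∈ γ.valuesFrom ev false := by
    intro x hx
    have h₁ := mem_valuesFrom_of_sandwich_rule (n := false) (u := a') (v := a) ev (by simp [γ]) hx
    have h₂ := mem_valuesFrom_of_sandwich_rule (n := false) (u := a) (v := a') ev (by simp [γ]) hx
    rw [ha, ha'] at h₁ h₂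
    exact ⟨h₁, h₂⟩
  have hgen : R ∪ R⁻¹ ⊆ γ.valuesFrom ev false := by
    rintro x (⟨k, rfl⟩ | ⟨k, hk⟩)
    · refine zpow_neg_mul_mul_zpow_mem hconj ?_ k
      exact hb ▸ mem_valuesFrom_of_terminal_rule ev (by simp [γ])
    · have hx : x = t ^ (-k) * g⁻¹ * t ^ k := by
        rw [← inv_inv x, ← hk]
        group
      rw [hx]
      refine zpow_neg_mul_mul_zpow_mem hconj ?_ k
      exact hb' ▸ mem_valuesFrom_of_terminal_rule ev (by simp [γ])
  let V : Submonoid G :=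
    { carrier := γ.valuesFrom ev true
      mul_mem' := mul_mem_valuesFrom_of_rule ev (by simp [γ])
      one_mem' := mem_valuesFrom_of_terminal_rule ev (w := []) (by simp [γ]) }
  intro x hx
  have hx' : x ∈ Submonoid.closure (R ∪ R⁻¹) := by
    rw [← Subgroup.closure_toSubmonoid]
    exact hx
  refine (Submonoid.closure_le (S := V)).2 (fun y hy => ?_) hx'
  change y ∈ γ.valuesFrom ev true
  simpa only [List.map_nil, List.prod_nil, one_mul, mul_one] using
    mem_valuesFrom_of_sandwich_rule (n := true) (u := []) (v := []) ev (by simp [γ]) (hgen hy)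

end ConjugatesGrammar

section Words

variable {X G : Type} [Group G] (f : X → G)

theorem wordHom_ofList (w : List (X ⊕ X)) :
    wordHom f (FreeMonoid.ofList w) = (w.map (Sum.elim f fun x => (f x)⁻¹)).prod := by
  rw [wordHom, FreeMonoid.lift_apply, FreeMonoid.toList_ofList]

theorem exists_wordHom_eq_of_mem_closure {g : G} (hg : g ∈ Subgroup.closure (Set.range f)) :
    ∃ w : List (X ⊕ X), wordHom f (FreeMonoid.ofList w) = g := by
  have hle : (Subgroup.closure (Set.range f)).toSubmonoid ≤ MonoidHom.mrange (wordHom f) := by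
    rw [Subgroup.closure_toSubmonoid, Submonoid.closure_le]
    rintro _ (⟨x, rfl⟩ | ⟨x, hx⟩)
    · exact ⟨FreeMonoid.of (Sum.inl x), rfl⟩
    · exact ⟨FreeMonoid.of (Sum.inr x), by simp [wordHom, hx]⟩
  obtain ⟨w, hw⟩ := hle hg
  exact ⟨w.toList, hw⟩

theorem isAlgebraicSubset_closure_zpow_conj {g t : G} (hg : g ∈ Subgroup.closure (Set.range f))
    (ht : t ∈ Subgroup.closure (Set.range f)) :
    IsAlgebraicSubset f (Subgroup.closure (Set.range fun k : ℤ => t ^ (-k) * g * t ^ k)) := by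
  classical
  obtain ⟨a, ha⟩ := exists_wordHom_eq_of_mem_closure f ht
  obtain ⟨a', ha'⟩ := exists_wordHom_eq_of_mem_closure f (inv_mem ht)
  obtain ⟨b, hb⟩ := exists_wordHom_eq_of_mem_closure f hg
  obtain ⟨b', hb'⟩ := exists_wordHom_eq_of_mem_closure f (inv_mem hg)
  rw [wordHom_ofList] at ha ha' hb hb'
  refine ⟨_, ⟨conjugatesGrammar a a' b b', rfl⟩, ?_⟩
  simp only [wordHom_ofList]
  exact (ContextFreeGrammar.image_language_eq_valuesFrom _ _).trans <|
    (valuesFrom_conjugatesGrammar_subset _ ha ha' hb hb').antisymm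
      (closure_subset_valuesFrom_conjugatesGrammar _ ha ha' hb hb')

end Words

theorem MonoidHom.ofAdd_mem_closure_range_single {ι G : Type} [Fintype ι] [DecidableEq ι]
    [Group G] (ψ : Multiplicative (ι → ℤ) →* G) (u : ι → ℤ) :
    ψ (Multiplicative.ofAdd u) ∈
      Subgroup.closure (Set.range fun i => ψ (Multiplicative.ofAdd (Pi.single i 1))) := by
  have hu : Multiplicative.ofAdd u ∈
      Subgroup.closure (Set.range fun i => Multiplicative.ofAdd (Pi.single i 1 : ι → ℤ)) := by
    rw [pi_eq_sum_univ' u, ofAdd_sum]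
    refine Subgroup.prod_mem _ fun i _ => ?_
    rw [ofAdd_zsmul]
    exact zpow_mem (Subgroup.subset_closure (Set.mem_range_self i)) _
  have hψu := Subgroup.mem_map_of_mem ψ hu
  rwa [MonoidHom.map_closure, ← Set.range_comp] at hψu

theorem closure_conjugates_isAlgebraic_ascendingHNN_freeAbelian_general (m : ℕ)
    (M : Matrix (Fin m) (Fin m) ℤ)
    (hinj : Function.Injective (matHom M))
    (u : Fin m → ℤ) :
    IsAlgebraicSubset
      (Sum.elim
        (fun i : Fin m =>
          (HNNExtension.of (Multiplicative.ofAdd (Pi.single i 1 : Fin m → ℤ)) :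
            AscendingHNN (matHom M) hinj))
        (fun _ : Unit => (HNNExtension.t : AscendingHNN (matHom M) hinj)))
      ((Subgroup.closure (Set.range fun k : ℤ =>
          (HNNExtension.t : AscendingHNN (matHom M) hinj) ^ (-k) *
            HNNExtension.of (Multiplicative.ofAdd u) * HNNExtension.t ^ k) :
        Subgroup (AscendingHNN (matHom M) hinj)) : Set (AscendingHNN (matHom M) hinj)) := by
  refine isAlgebraicSubset_closure_zpow_conj _ ?_ (Subgroup.subset_closure ⟨.inr (), rfl⟩)
  have hu := (HNNExtension.of : _ →* AscendingHNN (matHom M) hinj).ofAdd_mem_closure_range_single u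
  refine Subgroup.closure_mono ?_ hu
  rintro _ ⟨i, rfl⟩
  exact ⟨.inl i, rfl⟩

/-- Let `m ≥ 1`, let `M` be an `m × m` integer matrix with nonzero determinant, regarded
as an injective endomorphism of `ℤᵐ`, let `G = ℤᵐ ∗_M` and let `u ∈ ℤᵐ`. Then the
subgroup `S = ⟨{t⁻ᵏ of(u) tᵏ : k ∈ ℤ}⟩` is an algebraic subset of `G`, with respect to
the finite generating set consisting of the images of the standard basis vectors of `ℤᵐ`
together with the stable letter `t`. -/
theorem closure_conjugates_isAlgebraic_ascendingHNN_freeAbelian (m : ℕ) (hm : 1 ≤ m)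
    (M : Matrix (Fin m) (Fin m) ℤ) (hdet : M.det ≠ 0)
    (hinj : Function.Injective (matHom M))
    (u : Fin m → ℤ) :
    IsAlgebraicSubset
      (Sum.elim
        (fun i : Fin m =>
          (HNNExtension.of (Multiplicative.ofAdd (Pi.single i 1 : Fin m → ℤ)) :
            AscendingHNN (matHom M) hinj))
        (fun _ : Unit => (HNNExtension.t : AscendingHNN (matHom M) hinj)))
      ((Subgroup.closure (Set.range fun k : ℤ =>
          (HNNExtension.t : AscendingHNN (matHom M) hinj) ^ (-k) *
            HNNExtension.of (Multiplicative.ofAdd u) * HNNExtension.t ^ k) :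
        Subgroup (AscendingHNN (matHom M) hinj)) : Set (AscendingHNN (matHom M) hinj)) :=
  closure_conjugates_isAlgebraic_ascendingHNN_freeAbelian_general m M hinj u
end
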